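/- arXiv:1412.3374 — 5 statements merged into one kernel-verified Lean document; each statement's English description precedes it below -/
import Mathlib

section
/- Let M and N be persistence vector spaces over ℝⁿ (functors from (ℝⁿ, ⪯) to vector spaces over a field 𝔽). If M and N are ε-interleaved and L is a line parameterized by u = s·m⃗ + b with m* = min_i m_i > 0, then the restrictions M_L and N_L (persistence vector spaces over ℝ given by (M_L)_s = M_{s·m⃗+b}) are (ε/m*)-interleaved. -/
open scoped ENNReal

universe u v

/-- An `n`-dimensional persistence vector space over the field `F`:
a family of `F`-vector spaces indexed by `ℝⁿ` (with the componentwise order)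
together with functorial transition maps. -/
structure PersMod (n : ℕ) (F : Type u) [Field F] : Type (max (v + 1) u) where
  space : (Fin n → ℝ) → Type v
  [isAddCommGroup : ∀ p, AddCommGroup (space p)]
  [isModule : ∀ p, Module F (space p)]
  trans : ∀ p q : Fin n → ℝ, p ≤ q → space p →ₗ[F] space q
  trans_self : ∀ (p : Fin n → ℝ) (h : p ≤ p), trans p p h = LinearMap.id
  trans_comp : ∀ (p q r : Fin n → ℝ) (hpq : p ≤ q) (hqr : q ≤ r),
    (trans q r hqr).comp (trans p q hpq) = trans p r (le_trans hpq hqr)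

attribute [instance] PersMod.isAddCommGroup PersMod.isModule

/-- A 1-dimensional persistence vector space over `F`, indexed by `ℝ`. -/
structure PersMod1 (F : Type u) [Field F] : Type (max (v + 1) u) where
  space : ℝ → Type v
  [isAddCommGroup : ∀ s, AddCommGroup (space s)]
  [isModule : ∀ s, Module F (space s)]
  trans : ∀ s t : ℝ, s ≤ t → space s →ₗ[F] space t
  trans_self : ∀ (s : ℝ) (h : s ≤ s), trans s s h = LinearMap.id
  trans_comp : ∀ (s t r : ℝ) (hst : s ≤ t) (htr : t ≤ r),
    (trans t r htr).comp (trans s t hst) = trans s r (le_trans hst htr)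

attribute [instance] PersMod1.isAddCommGroup PersMod1.isModule

variable {n : ℕ} {F : Type u} [Field F]

lemma shift_mono {p q : Fin n → ℝ} (ε : ℝ) (h : p ≤ q) :
    (p + fun _ => ε) ≤ (q + fun _ => ε) := by
  intro i
  simpa using h i

lemma le_shift2 {p : Fin n → ℝ} {ε : ℝ} (hε : 0 ≤ ε) :
    p ≤ (p + fun _ => ε) + fun _ => ε := by
  intro i
  show p i ≤ p i + ε + ε
  linarith

/-- An `ε`-interleaving between two `n`-dimensional persistence vector spaces. -/
structure Interleaving {n : ℕ} {F : Type u} [Field F] (M N : PersMod n F) (ε : ℝ) where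
  hε : 0 ≤ ε
  α : ∀ p, M.space p →ₗ[F] N.space (p + fun _ => ε)
  β : ∀ p, N.space p →ₗ[F] M.space (p + fun _ => ε)
  α_nat : ∀ p q (h : p ≤ q),
    (α q).comp (M.trans p q h) = (N.trans _ _ (shift_mono ε h)).comp (α p)
  β_nat : ∀ p q (h : p ≤ q),
    (β q).comp (N.trans p q h) = (M.trans _ _ (shift_mono ε h)).comp (β p)
  βα : ∀ p, (β (p + fun _ => ε)).comp (α p) =
    M.trans p ((p + fun _ => ε) + fun _ => ε) (le_shift2 hε)
  αβ : ∀ p, (α (p + fun _ => ε)).comp (β p) =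
    N.trans p ((p + fun _ => ε) + fun _ => ε) (le_shift2 hε)

/-- An `ε`-interleaving between two 1-dimensional persistence vector spaces. -/
structure Interleaving1 {F : Type u} [Field F] (M N : PersMod1 F) (ε : ℝ) where
  hε : 0 ≤ ε
  α : ∀ s, M.space s →ₗ[F] N.space (s + ε)
  β : ∀ s, N.space s →ₗ[F] M.space (s + ε)
  α_nat : ∀ s t (h : s ≤ t),
    (α t).comp (M.trans s t h) = (N.trans (s + ε) (t + ε) (by linarith)).comp (α s)
  β_nat : ∀ s t (h : s ≤ t),
    (β t).comp (N.trans s t h) = (M.trans (s + ε) (t + ε) (by linarith)).comp (β s)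
  βα : ∀ s, (β (s + ε)).comp (α s) = M.trans s (s + ε + ε) (by linarith)
  αβ : ∀ s, (α (s + ε)).comp (β s) = N.trans s (s + ε + ε) (by linarith)

/-- The interleaving distance on `n`-dimensional persistence vector spaces. -/
noncomputable def dI (M N : PersMod n F) : ℝ≥0∞ :=
  sInf {x : ℝ≥0∞ | ∃ ε : ℝ, 0 ≤ ε ∧ x = ENNReal.ofReal ε ∧ Nonempty (Interleaving M N ε)}

/-- The interleaving distance on 1-dimensional persistence vector spaces. -/
noncomputable def dI1 (M N : PersMod1.{u, v} F) : ℝ≥0∞ :=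
  sInf {x : ℝ≥0∞ | ∃ ε : ℝ, 0 ≤ ε ∧ x = ENNReal.ofReal ε ∧ Nonempty (Interleaving1 M N ε)}

lemma line_mono (m b : Fin n → ℝ) (hm : ∀ i, 0 ≤ m i) {s t : ℝ} (h : s ≤ t) :
    s • m + b ≤ t • m + b := by
  intro i
  simp only [Pi.add_apply, Pi.smul_apply, smul_eq_mul]
  nlinarith [hm i]

/-- The restriction `M_L` of a persistence vector space `M` to the line
`L : u = s • m + b` (with positive direction vector `m`). -/
noncomputable def PersMod.restrict (M : PersMod n F) (m b : Fin n → ℝ)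
    (hm : ∀ i, 0 < m i) : PersMod1.{u, v} F where
  space s := M.space (s • m + b)
  trans s t h := M.trans _ _ (line_mono m b (fun i => (hm i).le) h)
  trans_self _ _ := M.trans_self _ _
  trans_comp _ _ _ _ _ := M.trans_comp _ _ _ _ _

lemma key_le (m b : Fin n → ℝ) (hm : ∀ i, 0 < m i) (ι : Fin n) (hι : ∀ i, m ι ≤ m i)
    {ε : ℝ} (hε : 0 ≤ ε) (s : ℝ) :
    (s • m + b) + (fun _ => ε) ≤ (s + ε / m ι) • m + b := by
  intro i
  simp only [Pi.add_apply, Pi.smul_apply, smul_eq_mul]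
  have h1 : ε / m ι * m ι = ε := div_mul_cancel₀ ε (hm ι).ne'
  have h2 : 0 ≤ ε / m ι := div_nonneg hε (hm ι).le
  nlinarith [hι i]

lemma key_le' (m b : Fin n → ℝ) (hm : ∀ i, 0 < m i) (ι : Fin n) (hι : ∀ i, m ι ≤ m i)
    {ε : ℝ} (hε : 0 ≤ ε) (s : ℝ) :
    s • m + b ≤ ((s + ε / m ι) • m + b) - fun _ => ε := by
  intro i
  simp only [Pi.sub_apply, Pi.add_apply, Pi.smul_apply, smul_eq_mul]
  have h1 : ε / m ι * m ι = ε := div_mul_cancel₀ ε (hm ι).ne'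
  have h2 : 0 ≤ ε / m ι := div_nonneg hε (hm ι).le
  nlinarith [hι i]

lemma shift_cancel (p : Fin n → ℝ) (ε : ℝ) : (p - fun _ => ε) + (fun _ => ε) = p := by
  funext i
  simp

/-!
Write `γ s = s • m + b`. Moving `δ = ε / m*` along the line dominates the diagonal shift by `ε`:
`γ (s + δ) - γ s = δ • m ≥ δ • m* = ε` coordinatewise. Hence following `α` (resp. `β`) at `γ s` by
the transition map from `γ s + ε` up to `γ (s + δ)` gives the two halves of a `δ`-interleaving of
the restrictions; naturality and the triangle identities reduce to those of the given interleaving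
and functoriality of the transition maps.
-/

namespace Interleaving

variable {M N : PersMod n F} {ε : ℝ}

def symm (I : Interleaving M N ε) : Interleaving N M ε where
  hε := I.hε
  α := I.β
  β := I.α
  α_nat := I.β_nat
  β_nat := I.α_nat
  βα := I.αβ
  αβ := I.βα

variable (I : Interleaving M N ε) {m b : Fin n → ℝ} (hm : ∀ i, 0 < m i) {δ : ℝ}
  (hδ : ∀ s : ℝ, (s • m + b + fun _ => ε) ≤ (s + δ) • m + b)

def restrictMap (s : ℝ) : M.space (s • m + b) →ₗ[F] N.space ((s + δ) • m + b) :=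
  (N.trans _ _ (hδ s)).comp (I.α (s • m + b))

lemma restrictMap_comp_trans (s t : ℝ) (h : s ≤ t) :
    (I.restrictMap hδ t).comp ((M.restrict m b hm).trans s t h) =
      ((N.restrict m b hm).trans (s + δ) (t + δ) (by linarith)).comp (I.restrictMap hδ s) := by
  change ((N.trans _ _ (hδ t)).comp (I.α _)).comp (M.trans _ _ _) =
    (N.trans _ _ _).comp ((N.trans _ _ (hδ s)).comp (I.α _))
  rw [LinearMap.comp_assoc, I.α_nat, ← LinearMap.comp_assoc, N.trans_comp,
    ← LinearMap.comp_assoc, N.trans_comp]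

lemma restrictMap_symm_comp_restrictMap (hδ₀ : 0 ≤ δ) (s : ℝ) :
    (I.symm.restrictMap hδ (s + δ)).comp (I.restrictMap hδ s) =
      (M.restrict m b hm).trans s (s + δ + δ) (by linarith) := by
  change ((M.trans _ _ (hδ (s + δ))).comp (I.β _)).comp ((N.trans _ _ (hδ s)).comp (I.α _)) =
    M.trans _ _ _
  rw [LinearMap.comp_assoc, ← LinearMap.comp_assoc (I.α _), I.β_nat, LinearMap.comp_assoc,
    I.βα, ← LinearMap.comp_assoc, M.trans_comp, M.trans_comp]

def restrict (hδ₀ : 0 ≤ δ) : Interleaving1 (M.restrict m b hm) (N.restrict m b hm) δ where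
  hε := hδ₀
  α := I.restrictMap hδ
  β := I.symm.restrictMap hδ
  α_nat := I.restrictMap_comp_trans hm hδ
  β_nat := I.symm.restrictMap_comp_trans hm hδ
  βα := I.restrictMap_symm_comp_restrictMap hm hδ hδ₀
  αβ := I.symm.restrictMap_symm_comp_restrictMap hm hδ hδ₀

end Interleaving

/-- If `M` and `N` are `ε`-interleaved persistence vector spaces over `ℝⁿ` and `L` is the
line `u = s • m + b` with `m* = m ι = min_i m i > 0`, then the restrictions `M_L` and `N_L`
are `(ε / m*)`-interleaved. -/
theorem stmt_3 (M N : PersMod n F) (ε : ℝ)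
    (hMN : Nonempty (Interleaving M N ε))
    (m b : Fin n → ℝ) (hm : ∀ i, 0 < m i) (ι : Fin n) (hι : ∀ i, m ι ≤ m i) :
    Nonempty (Interleaving1 (M.restrict m b hm) (N.restrict m b hm) (ε / m ι)) := by
  obtain ⟨I⟩ := hMN
  exact ⟨I.restrict hm (key_le m b hm ι hι I.hε) (div_nonneg I.hε (hm ι).le)⟩
end

section
/- Let M, N be persistence vector spaces over ℝⁿ, ε ≥ 0, and let α: M → N(ε⃗), β: N → M(ε⃗) be an ε-interleaving pair. Let L be the line u = s·m⃗ + b with m* = min_i m_i > 0, and set η = ε/m*. Define α_L(s) = α(u' − ε⃗) ∘ φ_M(u, u' − ε⃗) and β_L(s) = φ_M(u + ε⃗, u') ∘ β(u), where u = s·m⃗ + b and u' = (s+η)·m⃗ + b. Then β_L(s+η) ∘ α_L(s) = φ_{M_L}(s, s+2η) for all s ∈ ℝ. -/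
open scoped ENNReal

universe u v

variable {n : ℕ} {F : Type u} [Field F]

variable (M N : PersMod n F) (ε : ℝ) (I : Interleaving M N ε)
  (m b : Fin n → ℝ) (hm : ∀ i, 0 < m i) (ι : Fin n) (hι : ∀ i, m ι ≤ m i)

/-- `α_L(s) = α(u' - ε⃗) ∘ φ_M(u, u' - ε⃗)`, where `u = s • m + b`, `η = ε / m*` and
`u' = (s + η) • m + b`. -/
noncomputable def alphaL (s : ℝ) :
    M.space (s • m + b) →ₗ[F] N.space ((s + ε / m ι) • m + b) :=
  ((N.trans ((((s + ε / m ι) • m + b) - fun _ => ε) + fun _ => ε) ((s + ε / m ι) • m + b)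
      (le_of_eq (shift_cancel _ _))).comp
    (I.α (((s + ε / m ι) • m + b) - fun _ => ε))).comp
    (M.trans (s • m + b) (((s + ε / m ι) • m + b) - fun _ => ε)
      (key_le' m b hm ι hι I.hε s))

/-- `β_L(s) = φ_M(u + ε⃗, u') ∘ β(u)`, where `u = s • m + b`, `η = ε / m*` and
`u' = (s + η) • m + b`. -/
noncomputable def betaL (s : ℝ) :
    N.space (s • m + b) →ₗ[F] M.space ((s + ε / m ι) • m + b) :=
  (M.trans ((s • m + b) + fun _ => ε) ((s + ε / m ι) • m + b)
      (key_le m b hm ι hι I.hε s)).comp (I.β (s • m + b))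

/-- `β_L(s + η) ∘ α_L(s) = φ_(M_L)(s, s + 2η)` for all `s`, where `η = ε / m*`. -/
theorem stmt_4 (s : ℝ) :
    (betaL M N ε I m b hm ι hι (s + ε / m ι)).comp (alphaL M N ε I m b hm ι hι s) =
      M.trans (s • m + b) ((s + ε / m ι + ε / m ι) • m + b)
        (line_mono m b (fun i => (hm i).le) (by have : 0 ≤ ε / m ι := div_nonneg I.hε (hm ι).le; linarith)) := by
  ext x
  set w : Fin n → ℝ := ((s + ε / m ι) • m + b) - fun _ => ε with hw
  have hcomp : ∀ (p q r : Fin n → ℝ) (hpq : p ≤ q) (hqr : q ≤ r) (y : M.space p),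
      M.trans q r hqr (M.trans p q hpq y) = M.trans p r (le_trans hpq hqr) y := by
    intro p q r hpq hqr y
    exact LinearMap.congr_fun (M.trans_comp p q r hpq hqr) y
  simp only [LinearMap.comp_apply, betaL, alphaL]
  have h1 : ∀ y : M.space w,
      I.β ((s + ε / m ι) • m + b)
        (N.trans (w + fun _ => ε) ((s + ε / m ι) • m + b)
          (le_of_eq (shift_cancel _ _)) (I.α w y)) =
      M.trans ((w + fun _ => ε) + fun _ => ε)
        (((s + ε / m ι) • m + b) + fun _ => ε)
        (shift_mono ε (le_of_eq (shift_cancel _ _)))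
        (I.β (w + fun _ => ε) (I.α w y)) := by
    intro y
    exact LinearMap.congr_fun (I.β_nat (w + fun _ => ε) ((s + ε / m ι) • m + b)
      (le_of_eq (shift_cancel _ _))) (I.α w y)
  rw [h1]
  have h2 : ∀ y : M.space w,
      I.β (w + fun _ => ε) (I.α w y) =
        M.trans w ((w + fun _ => ε) + fun _ => ε) (le_shift2 I.hε) y :=
    fun y => LinearMap.congr_fun (I.βα w) y
  rw [h2, hcomp, hcomp, hcomp]
end

section
/- Let M, N, ε, L, η, α_L, β_L be as before (α_L(s) = α(u' − ε⃗)∘φ_M(u, u'−ε⃗), β_L(s) = φ_M(u+ε⃗, u')∘β(u)). Then α_L(s+η) ∘ β_L(s) = φ_{N_L}(s, s+2η) for all s ∈ ℝ. -/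
open scoped ENNReal

universe u v

variable {n : ℕ} {F : Type u} [Field F]

variable (M N : PersMod n F) (ε : ℝ) (I : Interleaving M N ε)
  (m b : Fin n → ℝ) (hm : ∀ i, 0 < m i) (ι : Fin n) (hι : ∀ i, m ι ≤ m i)

/-- `α_L(s + η) ∘ β_L(s) = φ_(N_L)(s, s + 2η)` for all `s`, where `η = ε / m*`.
Here, as in the paper, `α_L` denotes the map `M_L → N_L(η)` obtained from `α`;
applied after `β_L : N_L → M_L(η)` it is the composite below. -/
theorem stmt_5 (s : ℝ) :
    (alphaL M N ε I m b hm ι hι (s + ε / m ι)).comp (betaL M N ε I m b hm ι hι s) =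
      N.trans (s • m + b) ((s + ε / m ι + ε / m ι) • m + b)
        (line_mono m b (fun i => (hm i).le) (by have : 0 ≤ ε / m ι := div_nonneg I.hε (hm ι).le; linarith)) := by
  unfold alphaL betaL
  rw [LinearMap.comp_assoc, LinearMap.comp_assoc, ← LinearMap.comp_assoc
    (I.β (s • m + b)) _ _, M.trans_comp, ← LinearMap.comp_assoc _ _
    (I.α _), I.α_nat, LinearMap.comp_assoc, I.αβ, N.trans_comp, N.trans_comp]
end

section
/- Let M, N be persistence vector spaces over ℝⁿ. If M and N are ε-interleaved, then for every u ⪯ v in ℝⁿ, rank φ_M(u − ε⃗, v + ε⃗) ≤ rank φ_N(u, v). -/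
open scoped ENNReal

universe u v

variable {n : ℕ} {F : Type u} [Field F]

/-- If `M` and `N` are `ε`-interleaved then for all `u ⪯ v`,
`rank φ_M(u - ε⃗, v + ε⃗) ≤ rank φ_N(u, v)`. -/
theorem stmt_9 (M N : PersMod n F) (ε : ℝ) (hε : 0 ≤ ε) (I : Interleaving M N ε)
    (u v : Fin n → ℝ) (huv : u ≤ v) :
    LinearMap.rank (M.trans (u - fun _ => ε) (v + fun _ => ε)
        (by intro i; have := huv i; simp only [Pi.sub_apply, Pi.add_apply]; linarith)) ≤
      LinearMap.rank (N.trans u v huv) := by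
  set w := (u - fun _ => ε) with hw
  have h : w + (fun _ => ε) = u := shift_cancel u ε
  have h1 : w + (fun _ => ε) ≤ v := h ▸ huv
  have h2 : (w + fun _ => ε) + (fun _ => ε) ≤ v + fun _ => ε := shift_mono ε h1
  have hwv : w ≤ v + fun _ => ε := by
    intro i; have := huv i
    simp only [Pi.sub_apply, Pi.add_apply, hw]; linarith
  have factor : M.trans w (v + fun _ => ε) hwv =
      ((I.β v).comp ((N.trans (w + fun _ => ε) v h1).comp (I.α w))) := by
    rw [← LinearMap.comp_assoc, I.β_nat _ _ h1, LinearMap.comp_assoc, I.βα w,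
      M.trans_comp]
  have hle : LinearMap.rank (M.trans w (v + fun _ => ε) hwv) ≤
      LinearMap.rank (N.trans (w + fun _ => ε) v h1) := by
    rw [factor]
    exact le_trans (LinearMap.rank_comp_le_right _ _)
      (LinearMap.rank_comp_le_left _ _)
  have key : ∀ (u' : Fin n → ℝ) (e : (w + fun _ => ε) = u') (huv' : u' ≤ v),
      LinearMap.rank (N.trans (w + fun _ => ε) v h1) =
        LinearMap.rank (N.trans u' v huv') := by
    rintro u' rfl huv'; rfl
  rw [← key u h huv]
  exact hle
end

section
/- If M and N are ε-interleaved persistence vector spaces over ℝⁿ and L is a line parameterized by u = s·m⃗ + b with m* = min_i m_i > 0, then m* · d_I(M_L, N_L) ≤ ε; consequently m* · d_I(M_L, N_L) ≤ d_I(M, N). -/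
/-!
Since every coordinate of `m` is at least `m* = m ι`, moving along the line by `ε / m*`
dominates the diagonal shift by `ε` in `ℝⁿ`. So composing the interleaving maps of `M` and `N`
with transition maps gives an `ε / m*`-interleaving of `M_L` and `N_L`, whence
`m* · d_I(M_L, N_L) ≤ ε`; taking the infimum over `ε` bounds it by `d_I(M, N)`.
-/

open scoped ENNReal

universe u v

variable {n : ℕ} {F : Type u} [Field F]

namespace PersMod

def pullback (M : PersMod.{u, v} n F) (γ : ℝ → Fin n → ℝ) (hγ : Monotone γ) :
    PersMod1.{u, v} F where
  space s := M.space (γ s)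
  trans _ _ h := M.trans _ _ (hγ h)
  trans_self _ _ := M.trans_self _ _
  trans_comp _ _ _ _ _ := M.trans_comp _ _ _ _ _

@[simp]
theorem trans_trans (M : PersMod n F) {p q r : Fin n → ℝ} (hpq : p ≤ q) (hqr : q ≤ r)
    (x : M.space p) : M.trans q r hqr (M.trans p q hpq x) = M.trans p r (hpq.trans hqr) x :=
  LinearMap.congr_fun (M.trans_comp p q r hpq hqr) x

end PersMod

namespace Interleaving

variable {M N : PersMod.{u, v} n F} {ε : ℝ} (I : Interleaving M N ε)

@[simp]
theorem α_trans {p q : Fin n → ℝ} (h : p ≤ q) (x : M.space p) :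
    I.α q (M.trans p q h x) = N.trans _ _ (shift_mono ε h) (I.α p x) :=
  LinearMap.congr_fun (I.α_nat p q h) x

@[simp]
theorem β_trans {p q : Fin n → ℝ} (h : p ≤ q) (x : N.space p) :
    I.β q (N.trans p q h x) = M.trans _ _ (shift_mono ε h) (I.β p x) :=
  LinearMap.congr_fun (I.β_nat p q h) x

@[simp]
theorem β_α (p : Fin n → ℝ) (x : M.space p) :
    I.β _ (I.α p x) = M.trans _ _ (le_shift2 I.hε) x :=
  LinearMap.congr_fun (I.βα p) x

@[simp]
theorem α_β (p : Fin n → ℝ) (x : N.space p) :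
    I.α _ (I.β p x) = N.trans _ _ (le_shift2 I.hε) x :=
  LinearMap.congr_fun (I.αβ p) x

def pullback (γ : ℝ → Fin n → ℝ) (hγ : Monotone γ) {δ : ℝ}
    (hδ : 0 ≤ δ) (hshift : ∀ s, γ s + (fun _ => ε) ≤ γ (s + δ)) :
    Interleaving1 (M.pullback γ hγ) (N.pullback γ hγ) δ where
  hε := hδ
  α s := (N.trans _ _ (hshift s)).comp (I.α (γ s))
  β s := (M.trans _ _ (hshift s)).comp (I.β (γ s))
  α_nat _ _ _ := by unfold PersMod.pullback; ext; simp
  β_nat _ _ _ := by unfold PersMod.pullback; ext; simp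
  βα _ := by unfold PersMod.pullback; ext; simp
  αβ _ := by unfold PersMod.pullback; ext; simp

end Interleaving

theorem Interleaving1.dI1_le {M N : PersMod1.{u, v} F} {δ : ℝ} (I : Interleaving1 M N δ) :
    dI1 M N ≤ ENNReal.ofReal δ :=
  sInf_le ⟨δ, I.hε, rfl, ⟨I⟩⟩

theorem le_dI_of_forall {M N : PersMod.{u, v} n F} {x : ℝ≥0∞}
    (h : ∀ ε, Nonempty (Interleaving M N ε) → x ≤ ENNReal.ofReal ε) : x ≤ dI M N :=
  le_sInf fun _ ⟨ε, _, hx, hI⟩ => hx ▸ h ε hI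

theorem ofReal_mul_dI1_restrict_le (m b : Fin n → ℝ) (hm : ∀ i, 0 < m i) (ι : Fin n)
    (hι : ∀ i, m ι ≤ m i)
    {M N : PersMod.{u, v} n F} {ε : ℝ} (hMN : Nonempty (Interleaving M N ε)) :
    ENNReal.ofReal (m ι) * dI1 (M.restrict m b hm) (N.restrict m b hm) ≤ ENNReal.ofReal ε := by
  obtain ⟨I⟩ := hMN
  have hδ : 0 ≤ ε / m ι := div_nonneg I.hε (hm ι).le
  -- `M.restrict m b hm` is definitionally the pullback of `M` along `s ↦ s • m + b`.
  calc ENNReal.ofReal (m ι) * dI1 (M.restrict m b hm) (N.restrict m b hm)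
      ≤ ENNReal.ofReal (m ι) * ENNReal.ofReal (ε / m ι) :=
        mul_le_mul_right ((I.pullback _ _ hδ (key_le m b hm ι hι I.hε)).dI1_le) _
    _ = ENNReal.ofReal ε := by
        rw [← ENNReal.ofReal_mul (hm ι).le, mul_div_cancel₀ ε (hm ι).ne']

/-- If `M` and `N` are `ε`-interleaved and `L : u = s • m + b` is a line with
`m* = m ι = min_i m i > 0`, then `m* ⬝ d_I(M_L, N_L) ≤ ε`; consequently
`m* ⬝ d_I(M_L, N_L) ≤ d_I(M, N)`. -/
theorem stmt_11 (M N : PersMod.{u, v} n F) (ε : ℝ)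
    (hMN : Nonempty (Interleaving M N ε))
    (m b : Fin n → ℝ) (hm : ∀ i, 0 < m i) (ι : Fin n) (hι : ∀ i, m ι ≤ m i) :
    ENNReal.ofReal (m ι) * dI1 (M.restrict m b hm) (N.restrict m b hm) ≤
      ENNReal.ofReal ε ∧
    ENNReal.ofReal (m ι) * dI1 (M.restrict m b hm) (N.restrict m b hm) ≤ dI M N :=
  ⟨ofReal_mul_dI1_restrict_le m b hm ι hι hMN,
    le_dI_of_forall fun _ => ofReal_mul_dI1_restrict_le m b hm ι hι⟩
end
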